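/- arXiv:0803.2629 — 4 statements merged into one kernel-verified Lean document; each statement's English description precedes it below -/
import Mathlib

section
/- Let n ≥ 2 and let (x, y) ∈ ℂ^n × ℂ^n. Then (x, y) satisfies the system: x_0 = y_0 = 1, x_k y_k = 1 for 1 ≤ k ≤ n−1, and Σ_{m=0}^{n−1} x_{k+m} y_m = 0 for 1 ≤ k ≤ n−1 (indices mod n), if and only if (x, y) satisfies the system: x_0 = y_0 = 1, x_k y_k = 1 for 1 ≤ k ≤ n−1, and x̂_k · ŷ_{−k} = 1 for 1 ≤ k ≤ n−1. -/
/-!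
Let `c l = ∑ m, x (l + m) * y m` be the cyclic cross-correlation of `x` and `y`. Its Fourier
transform at `-k` is `n x̂_k ŷ_{-k}`, and `x_k y_k = 1` for all `k` gives `c 0 = n`. So both systems
say `c = n δ₀`, once on the physical side and once on the Fourier side. The Fourier condition only
concerns `k ≠ 0`, hence fixes `c` up to an additive constant, and `c 0 = n` pins that constant:
`c - n δ₀` vanishes at `0` and its transform is supported at `0`, so it is constant, hence zero.
-/

open scoped BigOperators

/-- The discrete Fourier transform on `ℂ^n`:
`û_j = (1/√n) ∑_{k=0}^{n-1} e^{2πi jk/n} u_k`, indices computed modulo `n`. -/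
noncomputable def dft (n : ℕ) [NeZero n] (u : ZMod n → ℂ) : ZMod n → ℂ := fun j =>
  (1 / (Real.sqrt n : ℂ)) * ∑ k : ZMod n,
    Complex.exp (2 * (Real.pi : ℂ) * Complex.I * (j.val : ℂ) * (k.val : ℂ) / (n : ℂ)) * u k

open scoped ZMod

namespace ZMod

variable {N : ℕ} [NeZero N] {E : Type*} [AddCommGroup E] [Module ℂ E]

lemma dft_single_zero (a : E) : 𝓕 (Pi.single 0 a) = fun _ : ZMod N ↦ a := by
  ext k
  simp [dft_apply, Pi.single_apply]

lemma invDFT_single_zero (a : E) : 𝓕⁻ (Pi.single 0 a) = fun _ : ZMod N ↦ (N : ℂ)⁻¹ • a := by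
  ext k
  simp [invDFT_apply, Pi.single_apply]

lemma eq_zero_of_apply_zero_of_dft_eq_zero {d : ZMod N → E} (h0 : d 0 = 0)
    (h : ∀ k ≠ 0, 𝓕 d k = 0) : d = 0 := by
  have hsupp : 𝓕 d = Pi.single 0 (𝓕 d 0) := by
    ext k
    rcases eq_or_ne k 0 with rfl | hk
    · simp
    · simp [h k hk, hk]
  have hdft0 : 𝓕 d 0 = 0 := by
    have : (N : ℂ)⁻¹ • 𝓕 d 0 = 0 := by
      rw [← congr_fun (invDFT_single_zero (𝓕 d 0)) 0, ← hsupp, LinearEquiv.symm_apply_apply, h0]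
    simpa [NeZero.ne] using this
  rwa [hdft0, Pi.single_zero, LinearEquiv.map_eq_zero_iff] at hsupp

lemma dft_eq_const_off_zero_iff {c : ZMod N → E} {a : E} (h0 : c 0 = a) :
    (∀ k ≠ 0, 𝓕 c k = a) ↔ ∀ l ≠ 0, c l = 0 := by
  constructor
  · intro h l hl
    have hd : c - Pi.single 0 a = 0 :=
      eq_zero_of_apply_zero_of_dft_eq_zero (by simp [h0])
        fun k hk ↦ by simp [dft_single_zero, h k hk]
    simpa [hl] using congr_fun hd l
  · intro h k _
    have hc : c = Pi.single 0 a := by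
      ext l
      rcases eq_or_ne l 0 with rfl | hl
      · simp [h0]
      · simp [h l hl, hl]
    rw [hc, dft_single_zero]

def cyclicCorr (x y : ZMod N → ℂ) (l : ZMod N) : ℂ := ∑ m, x (l + m) * y m

lemma cyclicCorr_zero {x y : ZMod N → ℂ} (h : ∀ m, x m * y m = 1) : cyclicCorr x y 0 = N := by
  simp [cyclicCorr, h]

lemma dft_cyclicCorr (x y : ZMod N → ℂ) (k : ZMod N) :
    𝓕 (cyclicCorr x y) k = 𝓕 x k * 𝓕 y (-k) := by
  simp only [dft_apply, cyclicCorr, smul_eq_mul, Finset.mul_sum, Finset.sum_mul]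
  rw [Finset.sum_comm]
  refine Finset.sum_congr rfl fun m _ ↦ ?_
  rw [← (Equiv.subRight m).sum_comp]
  refine Finset.sum_congr rfl fun j _ ↦ ?_
  rw [Equiv.subRight_apply, sub_add_cancel,
    show stdAddChar (-((j - m) * k)) = stdAddChar (-(j * k)) * stdAddChar (-(m * -k)) by
      rw [← AddChar.map_add_eq_mul]; ring_nf]
  ring

end ZMod

/-- Mathlib's `𝓕` uses the kernel `e^{-2πi jk/N}` and no normalisation, whence `-j` and `√n`. -/
lemma dft_eq_inv_sqrt_mul_dft_neg (n : ℕ) [NeZero n] (u : ZMod n → ℂ) (j : ZMod n) :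
    dft n u j = (Real.sqrt n : ℂ)⁻¹ * 𝓕 u (-j) := by
  have hexp : ∀ k : ZMod n, Complex.exp (2 * Real.pi * Complex.I * j.val * k.val / n) =
      ZMod.stdAddChar (k * j) := by
    intro k
    rw [show k * j = ((j.val * k.val : ℕ) : ZMod n) by simp [mul_comm],
      ZMod.stdAddChar_apply, ZMod.toCircle_natCast]
    push_cast
    ring_nf
  simp only [dft, ZMod.dft_apply, hexp, mul_neg, neg_neg, smul_eq_mul, one_div]

lemma dft_mul_dft_neg (n : ℕ) [NeZero n] (x y : ZMod n → ℂ) (k : ZMod n) :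
    dft n x k * dft n y (-k) = (n : ℂ)⁻¹ * 𝓕 (ZMod.cyclicCorr x y) (-k) := by
  have hsq : (Real.sqrt n : ℂ)⁻¹ * (Real.sqrt n : ℂ)⁻¹ = (n : ℂ)⁻¹ := by
    rw [← mul_inv, ← Complex.ofReal_mul, Real.mul_self_sqrt n.cast_nonneg, Complex.ofReal_natCast]
  rw [dft_eq_inv_sqrt_mul_dft_neg, dft_eq_inv_sqrt_mul_dft_neg, ZMod.dft_cyclicCorr, neg_neg, ← hsq]
  ring

theorem xy_system_iff_fourier_system_general (n : ℕ) [NeZero n]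
    (x y : ZMod n → ℂ) :
    (x 0 = 1 ∧ y 0 = 1 ∧ (∀ k : ZMod n, k ≠ 0 → x k * y k = 1) ∧
      (∀ k : ZMod n, k ≠ 0 → ∑ m : ZMod n, x (k + m) * y m = 0)) ↔
    (x 0 = 1 ∧ y 0 = 1 ∧ (∀ k : ZMod n, k ≠ 0 → x k * y k = 1) ∧
      (∀ k : ZMod n, k ≠ 0 → dft n x k * dft n y (-k) = 1)) := by
  refine and_congr_right fun hx0 ↦ and_congr_right fun hy0 ↦ and_congr_right fun hxy ↦ ?_
  have hc0 : ZMod.cyclicCorr x y 0 = n := ZMod.cyclicCorr_zero fun m ↦ by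
    rcases eq_or_ne m 0 with rfl | hm
    · simp [hx0, hy0]
    · exact hxy m hm
  have hn : (n : ℂ) ≠ 0 := NeZero.ne _
  change (∀ k ≠ 0, ZMod.cyclicCorr x y k = 0) ↔ _
  rw [← ZMod.dft_eq_const_off_zero_iff hc0, neg_surjective.forall]
  simp only [neg_ne_zero, dft_mul_dft_neg, inv_mul_eq_one₀ hn, eq_comm]

/-- The system `x_0 = y_0 = 1`, `x_k y_k = 1` (1 ≤ k ≤ n-1),
`∑_m x_{k+m} y_m = 0` (1 ≤ k ≤ n-1) is equivalent to the system
`x_0 = y_0 = 1`, `x_k y_k = 1` (1 ≤ k ≤ n-1), `x̂_k ŷ_{-k} = 1` (1 ≤ k ≤ n-1). -/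
theorem xy_system_iff_fourier_system (n : ℕ) [NeZero n] (hn : 2 ≤ n)
    (x y : ZMod n → ℂ) :
    (x 0 = 1 ∧ y 0 = 1 ∧ (∀ k : ZMod n, k ≠ 0 → x k * y k = 1) ∧
      (∀ k : ZMod n, k ≠ 0 → ∑ m : ZMod n, x (k + m) * y m = 0)) ↔
    (x 0 = 1 ∧ y 0 = 1 ∧ (∀ k : ZMod n, k ≠ 0 → x k * y k = 1) ∧
      (∀ k : ZMod n, k ≠ 0 → dft n x k * dft n y (-k) = 1)) :=
  xy_system_iff_fourier_system_general n x y
end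

section
/- Let n ≥ 2. The map which sends a cyclic n-root z = (z_0, …, z_{n−1}) to the vector x = (x_0, …, x_{n−1}) defined by x_0 = 1, x_1 = z_0, x_2 = z_0 z_1, …, x_{n−1} = z_0 z_1 ⋯ z_{n−2} is a bijection from the set of cyclic n-roots onto the set of cyclic n-roots on x-level, and its inverse sends x to (x_1/x_0, x_2/x_1, …, x_0/x_{n−1}). -/
open scoped BigOperators

/-- A cyclic `n`-root: `z ∈ ℂ^n` with `∑_{i=0}^{n-1} z_i z_{i+1} ⋯ z_{i+k-1} = 0` for
`1 ≤ k ≤ n-1` (indices mod `n`) and `z_0 z_1 ⋯ z_{n-1} = 1`. -/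
def IsCyclicRoot (n : ℕ) [NeZero n] (z : ZMod n → ℂ) : Prop :=
  (∀ k : ℕ, 1 ≤ k → k ≤ n - 1 →
    ∑ i : ZMod n, ∏ t ∈ Finset.range k, z (i + (t : ZMod n)) = 0) ∧
  ∏ i : ZMod n, z i = 1

/-- A cyclic `n`-root on `x`-level: `x ∈ (ℂ*)^n` with `x_0 = 1` and
`∑_{m=0}^{n-1} x_{m+j}/x_m = 0` for `1 ≤ j ≤ n-1` (indices mod `n`). -/
def IsCyclicRootXLevel (n : ℕ) [NeZero n] (x : ZMod n → ℂ) : Prop :=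
  (∀ i, x i ≠ 0) ∧ x 0 = 1 ∧
  ∀ j : ZMod n, j ≠ 0 → ∑ m : ZMod n, x (m + j) / x m = 0

open Finset

/-!
Writing `x_i = z_0 ⋯ z_{i-1}`, the cyclic product `z_m z_{m+1} ⋯ z_{m+j-1}` is the quotient
`x_{m+j} / x_m`, so the `j`-th cyclic equation for `z` is the `j`-th equation on `x`-level.
The condition `z_0 ⋯ z_{n-1} = 1` makes the partial products `k ↦ z_0 ⋯ z_{k-1}` periodic
of period `n`, so the quotient formula also holds when `m + j` wraps around modulo `n`.
Conversely the successive quotients `x_{j+1} / x_j` telescope back to `x`.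
-/

section PrefixProd

variable {M : Type*} [CommMonoid M] {n : ℕ}

def prefixProd (z : ZMod n → M) (i : ZMod n) : M :=
  ∏ t ∈ range i.val, z t

theorem prod_range_add_eq_mul (z : ZMod n → M) (a k : ℕ) :
    ∏ t ∈ range (a + k), z t = (∏ t ∈ range a, z t) * ∏ s ∈ range k, z (a + s) := by
  rw [prod_range_add]
  push_cast
  rfl

variable [NeZero n]

theorem prod_range_natCast_eq_prod_univ (g : ZMod n → M) :
    ∏ s ∈ range n, g s = ∏ i : ZMod n, g i :=
  prod_nbij' (fun s => (s : ZMod n)) ZMod.val (fun _ _ => mem_univ _)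
    (fun i _ => mem_range.2 (ZMod.val_lt i))
    (fun _ hs => ZMod.val_cast_of_lt (mem_range.1 hs))
    (fun i _ => ZMod.natCast_zmod_val i) (fun _ _ => rfl)

theorem prod_range_add_natCast_eq_prod_univ (z : ZMod n → M) (c : ZMod n) :
    ∏ s ∈ range n, z (c + s) = ∏ i : ZMod n, z i := by
  rw [prod_range_natCast_eq_prod_univ fun i => z (c + i)]
  exact Fintype.prod_equiv (Equiv.addLeft c) _ _ fun _ => rfl

theorem prod_range_mod_eq (z : ZMod n → M) (hz : ∏ i, z i = 1) (a : ℕ) :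
    ∏ t ∈ range (a % n), z t = ∏ t ∈ range a, z t := by
  conv_rhs => rw [← Nat.mod_add_div a n]
  induction a / n with
  | zero => simp
  | succ q ih =>
    rw [Nat.mul_succ, ← add_assoc, prod_range_add_eq_mul,
      prod_range_add_natCast_eq_prod_univ, hz, mul_one, ih]

theorem prefixProd_add_natCast (z : ZMod n → M) (hz : ∏ i, z i = 1) (m : ZMod n) (k : ℕ) :
    prefixProd z (m + k) = prefixProd z m * ∏ s ∈ range k, z (m + s) := by
  have hm : m + k = ((m.val + k : ℕ) : ZMod n) := by push_cast; rw [ZMod.natCast_zmod_val]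
  rw [prefixProd, hm, ZMod.val_natCast, prod_range_mod_eq z hz, prod_range_add_eq_mul,
    ZMod.natCast_zmod_val, prefixProd]

end PrefixProd

section Telescope

variable {G : Type*} [CommGroupWithZero G] {n : ℕ}

def succQuot (x : ZMod n → G) (j : ZMod n) : G :=
  x (j + 1) / x j

theorem prod_range_succQuot (x : ZMod n → G) (hx : ∀ i, x i ≠ 0) (c : ZMod n) (k : ℕ) :
    ∏ t ∈ range k, succQuot x (c + t) = x (c + k) / x c := by
  induction k with
  | zero => simp [div_self (hx c)]
  | succ k ih =>
    rw [prod_range_succ, ih, succQuot, Nat.cast_succ, ← add_assoc, mul_comm]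
    exact div_mul_div_cancel₀ (hx _)

theorem prod_succQuot [NeZero n] (x : ZMod n → G) (hx : ∀ i, x i ≠ 0) :
    ∏ j, succQuot x j = 1 := by
  simp only [succQuot, prod_div_distrib]
  rw [Fintype.prod_equiv (Equiv.addRight 1) (fun i => x (i + 1)) x fun _ => rfl,
    div_self (prod_ne_zero_iff.2 fun i _ => hx i)]

end Telescope

section CyclicRoot

variable {n : ℕ} [NeZero n]

theorem IsCyclicRoot.ne_zero {z : ZMod n → ℂ} (hz : IsCyclicRoot n z) (i : ZMod n) :
    z i ≠ 0 := fun h0 => by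
  simpa [prod_eq_zero (mem_univ i) h0] using hz.2

theorem IsCyclicRoot.prefixProd_ne_zero {z : ZMod n → ℂ} (hz : IsCyclicRoot n z) (i : ZMod n) :
    prefixProd z i ≠ 0 :=
  prod_ne_zero_iff.2 fun _ _ => hz.ne_zero _

theorem IsCyclicRoot.isCyclicRootXLevel_prefixProd {z : ZMod n → ℂ} (hz : IsCyclicRoot n z) :
    IsCyclicRootXLevel n (prefixProd z) := by
  refine ⟨hz.prefixProd_ne_zero, by simp [prefixProd], fun j hj => ?_⟩
  have hj_pos : 1 ≤ j.val := Nat.one_le_iff_ne_zero.2 ((ZMod.val_ne_zero j).2 hj)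
  calc ∑ m, prefixProd z (m + j) / prefixProd z m
      = ∑ m, ∏ s ∈ range j.val, z (m + s) := by
        refine sum_congr rfl fun m _ => ?_
        rw [← ZMod.natCast_zmod_val j, prefixProd_add_natCast z hz.2, ZMod.natCast_zmod_val,
          mul_div_cancel_left₀ _ (hz.prefixProd_ne_zero m)]
    _ = 0 := hz.1 j.val hj_pos (Nat.le_sub_one_of_lt (ZMod.val_lt j))

theorem IsCyclicRootXLevel.isCyclicRoot_succQuot {x : ZMod n → ℂ} (hx : IsCyclicRootXLevel n x) :
    IsCyclicRoot n (succQuot x) := by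
  refine ⟨fun k hk_pos hk_le => ?_, prod_succQuot x hx.1⟩
  have hk : (k : ZMod n) ≠ 0 := fun h => by
    have := Nat.le_of_dvd hk_pos ((ZMod.natCast_eq_zero_iff k n).1 h)
    omega
  calc ∑ i, ∏ t ∈ range k, succQuot x (i + t)
      = ∑ i, x (i + k) / x i := sum_congr rfl fun i _ => prod_range_succQuot x hx.1 i k
    _ = 0 := hx.2.2 k hk

theorem IsCyclicRoot.succQuot_prefixProd {z : ZMod n → ℂ} (hz : IsCyclicRoot n z) :
    succQuot (prefixProd z) = z := by
  funext j
  rw [succQuot, ← Nat.cast_one, prefixProd_add_natCast z hz.2, prod_range_one, Nat.cast_zero, add_zero, mul_div_cancel_left₀ _ (hz.prefixProd_ne_zero j)]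

theorem IsCyclicRootXLevel.prefixProd_succQuot {x : ZMod n → ℂ} (hx : IsCyclicRootXLevel n x) :
    prefixProd (succQuot x) = x := by
  funext i
  have h := prod_range_succQuot x hx.1 0 i.val
  simp only [zero_add, ZMod.natCast_zmod_val, hx.2.1, div_one] at h
  exact h

end CyclicRoot

theorem cyclicRoot_equiv_xLevel_general (n : ℕ) [NeZero n] :
    Set.BijOn (fun (z : ZMod n → ℂ) (i : ZMod n) => ∏ t ∈ Finset.range i.val, z (t : ZMod n))
      {z | IsCyclicRoot n z} {x | IsCyclicRootXLevel n x} ∧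
    Set.InvOn (fun (x : ZMod n → ℂ) (j : ZMod n) => x (j + 1) / x j)
      (fun (z : ZMod n → ℂ) (i : ZMod n) => ∏ t ∈ Finset.range i.val, z (t : ZMod n))
      {z | IsCyclicRoot n z} {x | IsCyclicRootXLevel n x} := by
  have hinv : Set.InvOn succQuot prefixProd {z | IsCyclicRoot n z}
      {x | IsCyclicRootXLevel n x} :=
    ⟨fun _ hz => hz.succQuot_prefixProd, fun _ hx => hx.prefixProd_succQuot⟩
  exact ⟨hinv.bijOn (fun _ hz => hz.isCyclicRootXLevel_prefixProd)
    (fun _ hx => hx.isCyclicRoot_succQuot), hinv⟩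

/-- The map `z ↦ x`, `x_i = z_0 z_1 ⋯ z_{i-1}` (so `x_0 = 1`), is a bijection from the set
of cyclic `n`-roots onto the set of cyclic `n`-roots on `x`-level, with inverse
`x ↦ (x_1/x_0, x_2/x_1, …, x_0/x_{n-1})`. -/
theorem cyclicRoot_equiv_xLevel (n : ℕ) [NeZero n] (hn : 2 ≤ n) :
    Set.BijOn (fun (z : ZMod n → ℂ) (i : ZMod n) => ∏ t ∈ Finset.range i.val, z (t : ZMod n))
      {z | IsCyclicRoot n z} {x | IsCyclicRootXLevel n x} ∧
    Set.InvOn (fun (x : ZMod n → ℂ) (j : ZMod n) => x (j + 1) / x j)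
      (fun (z : ZMod n → ℂ) (i : ZMod n) => ∏ t ∈ Finset.range i.val, z (t : ZMod n))
      {z | IsCyclicRoot n z} {x | IsCyclicRootXLevel n x} :=
  cyclicRoot_equiv_xLevel_general n
end

section
/- (Chebotarëv) Let p be a prime number and let F_p be the p × p matrix with entries (F_p)_{kl} = (1/√p) e^{2πi kl/p} for 0 ≤ k, l ≤ p−1. Then for every pair of nonempty subsets K, L ⊆ {0, 1, …, p−1} of the same cardinality |K| = |L|, the submatrix ((1/√p) e^{2πi kl/p})_{k ∈ K, l ∈ L} has nonzero determinant. -/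
/-!
Up to the factor `(1/√p) ^ m` the minor is `det (ζ ^ (a i * b j))` with `ζ = e^{2πi/p}`, where
`a` and `b` list distinct residues mod `p`. Put `λ = ζ - 1` and expand `ζ ^ (a i * b j) = ∑ t, (a i * b j).choose t * λ ^ t`. By
multilinearity in the rows, the determinant is
`∑ r, λ ^ (∑ i, r i) * det (choose (a i * b j) (r i))`.
Row `i` of such a minor is a polynomial of degree `r i` in `b j`, so the minor vanishes unless at
most `s + 1` of the `r i` are `≤ s` for every `s`; hence every term has `λ`-order at least
`N = 0 + 1 + ⋯ + (m - 1)`, with equality only when `r` is a permutation of `{0, …, m - 1}`.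
The coefficient `c` of `λ ^ N` satisfies `(∏ i < m, i !) * c = V(a) * V(b)` with Vandermonde
determinants, which are nonzero mod `p`. If the determinant vanished, `c` would be divisible by
`λ` in `ℤ[ζ]`, and `(ζ - 1) ℤ[ζ] ∩ ℤ = p ℤ`.
-/

open Polynomial Finset Matrix

theorem Equiv.Perm.eq_one_of_forall_le {n : Type*} [Fintype n] [LinearOrder n]
    {σ : Equiv.Perm n} (h : ∀ i, i ≤ σ i) : σ = 1 := by
  by_contra hσ
  have hne : σ.support.Nonempty := nonempty_iff_ne_empty.2 (mt support_eq_empty_iff.1 hσ)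
  have hx : σ.support.max' hne ∈ σ.support := max'_mem _ _
  exact mem_support.1 hx (le_antisymm (le_max' _ _ (apply_mem_support.2 hx)) (h _))

theorem Matrix.permanent_of_isLowerTriangular {n R : Type*} [Fintype n] [LinearOrder n]
    [CommSemiring R] {M : Matrix n n R} (hM : M.IsLowerTriangular) :
    M.permanent = ∏ i, M i i := by
  rw [permanent, sum_eq_single 1 _ (by simp)]
  · simp
  · intro σ _ hσ
    obtain ⟨i, hi⟩ : ∃ i, σ i < i := by
      by_contra! h
      exact hσ (Equiv.Perm.eq_one_of_forall_le h)
    exact prod_eq_zero (mem_univ i) (hM (by simpa using hi))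

theorem Matrix.sum_perm_det_mul_eq_permanent_mul_det {n R : Type*} [Fintype n] [DecidableEq n]
    [CommRing R] (L W : Matrix n n R) :
    ∑ σ : Equiv.Perm n, (of fun i j => L (σ i) j * W i j).det = L.permanent * W.det := by
  simp only [det_apply, of_apply, prod_mul_distrib]
  rw [sum_comm, mul_sum]
  refine sum_congr rfl fun τ _ => ?_
  have hL : ∑ σ : Equiv.Perm n, ∏ i, L (σ (τ i)) i = L.permanent :=
    Fintype.sum_equiv (Equiv.mulRight τ) _ _ fun σ => rfl
  rw [← hL, sum_mul]
  exact sum_congr rfl fun σ _ => by rw [mul_smul_comm]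

theorem le_apply_sort_of_card_filter_le {m : ℕ} {r : Fin m → ℕ}
    (h : ∀ s, #{i | r i ≤ s} ≤ s + 1) (k : Fin m) : (k : ℕ) ≤ r (Tuple.sort r k) := by
  have hsub : (Iic k).map (Tuple.sort r).toEmbedding ⊆
      ({i | r i ≤ r (Tuple.sort r k)} : Finset (Fin m)) := by
    intro i hi
    obtain ⟨j, hj, rfl⟩ := mem_map.1 hi
    simpa using Tuple.monotone_sort r (mem_Iic.1 hj)
  have := (card_le_card hsub).trans (h _)
  simpa using this

theorem exists_perm_eq_of_card_filter_le {m : ℕ} {r : Fin m → ℕ}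
    (h : ∀ s, #{i | r i ≤ s} ≤ s + 1) (hsum : ∑ i, r i ≤ ∑ i : Fin m, (i : ℕ)) :
    ∃ σ : Equiv.Perm (Fin m), ∀ i, r i = σ i := by
  set τ := Tuple.sort r
  have hle : ∀ k ∈ (univ : Finset (Fin m)), (k : ℕ) ≤ r (τ k) := fun k _ =>
    le_apply_sort_of_card_filter_le h k
  have hτ : ∑ k, r (τ k) = ∑ i, r i := Equiv.sum_comp τ r
  have heq := (sum_eq_sum_iff_of_le hle).1 (le_antisymm (sum_le_sum hle) (hτ ▸ hsum))
  exact ⟨τ⁻¹, fun i => by simpa using (heq (τ⁻¹ i) (mem_univ _)).symm⟩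

theorem Matrix.det_eq_zero_of_rows_mem {K n : Type*} [Field K] [Fintype n] [DecidableEq n]
    {M : Matrix n n K} (W : Submodule K (n → K)) (S : Finset n) (hS : ∀ i ∈ S, M i ∈ W)
    (hW : Module.finrank K W < #S) : M.det = 0 := by
  by_contra hM
  have hli : LinearIndependent K fun i : S => (⟨M i, hS i i.2⟩ : W) :=
    LinearIndependent.of_comp W.subtype
      ((linearIndependent_rows_of_det_ne_zero hM).comp _ Subtype.val_injective)
  have := hli.fintype_card_le_finrank
  simp only [Fintype.card_coe] at this
  omega

theorem Matrix.det_eval_eq_zero_of_natDegree_le {K n : Type*} [Field K] [Fintype n]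
    [DecidableEq n] (P : n → K[X]) (x : n → K) (s : ℕ)
    (hs : s + 1 < #{i | (P i).natDegree ≤ s}) :
    (of fun i j => (P i).eval (x j)).det = 0 := by
  let ev : K[X] →ₗ[K] n → K := LinearMap.pi fun j => leval (x j)
  refine det_eq_zero_of_rows_mem ((degreeLT K (s + 1)).map ev) {i | (P i).natDegree ≤ s}
    (fun i hi => ?_) ?_
  · refine ⟨P i, mem_degreeLT.2 ?_, rfl⟩
    have hdeg : (P i).natDegree < s + 1 := Nat.lt_succ_of_le (mem_filter.1 hi).2
    exact degree_le_natDegree.trans_lt (by exact_mod_cast hdeg)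
  · refine lt_of_le_of_lt (Submodule.finrank_map_le _ _) ?_
    rwa [(degreeLTEquiv K (s + 1)).finrank_eq, Module.finrank_fin_fun]

theorem add_one_pow_eq_sum_range {R : Type*} [CommSemiring R] (x : R) {n T : ℕ} (h : n < T) :
    (x + 1) ^ n = ∑ t ∈ range T, (n.choose t : R) * x ^ t := by
  rw [add_pow, ← sum_subset (range_subset_range.2 h) fun t _ ht => ?_]
  · exact sum_congr rfl fun t _ => by rw [one_pow, mul_one, mul_comm]
  · rw [Nat.choose_eq_zero_of_lt (by simpa using ht), Nat.cast_zero, zero_mul]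

theorem Matrix.det_of_sum_rows {R n ι : Type*} [CommRing R] [Fintype n] [DecidableEq n]
    [DecidableEq ι] (s : Finset ι) (f : n → ι → n → R) :
    (of fun i j => ∑ t ∈ s, f i t j).det =
      ∑ r ∈ Fintype.piFinset fun _ => s, (of fun i j => f i (r i) j).det := by
  have hrows : (of fun i j => ∑ t ∈ s, f i t j) = fun i => ∑ t ∈ s, f i t := by
    ext i j
    simp
  rw [hrows]
  exact (detRowAlternating (R := R) (n := n)).map_sum_finset f fun _ => s

section ChooseMatrix

variable {m : ℕ} (a b : Fin m → ℕ)

def chooseMatrix (r : Fin m → ℕ) : Matrix (Fin m) (Fin m) ℤ :=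
  of fun i j => ((a i * b j).choose (r i) : ℤ)

theorem det_chooseMatrix_eq_zero (r : Fin m → ℕ) (s : ℕ) (hs : s + 1 < #{i | r i ≤ s}) :
    (chooseMatrix a b r).det = 0 := by
  let P : Fin m → ℚ[X] := fun i =>
    C ((r i).factorial : ℚ)⁻¹ * (descPochhammer ℚ (r i)).comp (C (a i : ℚ) * X)
  have hP : ∀ i, (P i).natDegree ≤ r i := fun i =>
    (natDegree_C_mul_le _ _).trans <| natDegree_comp_le.trans <| by
      rw [descPochhammer_natDegree]
      exact (Nat.mul_le_mul_left _ ((natDegree_C_mul_le _ _).trans natDegree_X_le)).trans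
        (by simp)
  have hcard : #{i | r i ≤ s} ≤ #{i | (P i).natDegree ≤ s} :=
    card_le_card fun i hi => by simpa using (hP i).trans (by simpa using hi)
  have h := det_eval_eq_zero_of_natDegree_le P (fun j => (b j : ℚ)) s (hs.trans_le hcard)
  have hmap : (chooseMatrix a b r).map (Int.cast : ℤ → ℚ) =
      of fun i j => (P i).eval (b j : ℚ) := by
    ext i j
    simp [chooseMatrix, P, Nat.cast_choose_eq_descPochhammer_div, eval_comp, div_eq_inv_mul]
  rw [← hmap, ← Int.cast_det] at h
  exact_mod_cast h

theorem det_add_one_pow_eq_sum {R : Type*} [CommRing R] (x : R) {T : ℕ}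
    (hT : ∀ i j, a i * b j < T) :
    (of fun i j => (x + 1) ^ (a i * b j)).det =
      ∑ r ∈ Fintype.piFinset fun _ => range T,
        ((chooseMatrix a b r).det : R) * x ^ ∑ i, r i := by
  simp_rw [add_one_pow_eq_sum_range x (hT _ _), det_of_sum_rows]
  refine sum_congr rfl fun r _ => ?_
  rw [← prod_pow_eq_pow_sum, mul_comm, Int.cast_det, ← det_mul_column]
  congr 1
  ext i j
  simp [chooseMatrix, mul_comm]

noncomputable def detPowPoly : ℤ[X] :=
  (of fun i j => (X + 1 : ℤ[X]) ^ (a i * b j)).det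

def permChooseDetSum : ℤ :=
  ∑ σ : Equiv.Perm (Fin m), (chooseMatrix a b fun i => σ i).det

theorem coeff_detPowPoly {k : ℕ} (hk : k ≤ ∑ i : Fin m, (i : ℕ)) :
    (detPowPoly a b).coeff k =
      if k = ∑ i : Fin m, (i : ℕ) then permChooseDetSum a b else 0 := by
  -- `B + m + 1` bounds both the exponents `a i * b j` and the permutation patterns `r i < m`.
  obtain ⟨B, hB⟩ := Finite.exists_le fun ij : Fin m × Fin m => a ij.1 * b ij.2
  have hT : ∀ i j, a i * b j < B + m + 1 := fun i j =>
    Nat.lt_succ_of_le ((hB (i, j)).trans (Nat.le_add_right B m))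
  let ι : Equiv.Perm (Fin m) → Fin m → ℕ := fun σ i => σ i
  have hι : ι.Injective := fun σ τ h => Equiv.ext fun i => Fin.ext (congrFun h i)
  have hsub : univ.image ι ⊆ Fintype.piFinset fun _ => range (B + m + 1) := by
    simp only [image_subset_iff, Fintype.mem_piFinset, mem_range]
    exact fun σ _ i => lt_of_lt_of_le (σ i).2 (by omega)
  rw [detPowPoly, det_add_one_pow_eq_sum a b X hT, finsetSum_coeff]
  simp_rw [← C_eq_intCast, coeff_C_mul_X_pow]
  rw [← sum_subset hsub fun r _ hr => ?_, sum_image fun σ _ τ _ h => hι h]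
  · have hN : ∀ σ, ∑ i, ι σ i = ∑ i : Fin m, (i : ℕ) := fun σ =>
      Equiv.sum_comp σ fun i : Fin m => (i : ℕ)
    simp_rw [hN]
    split_ifs <;> simp [permChooseDetSum, ι]
  · rw [ite_eq_right_iff]
    intro hkr
    by_contra hD
    have hspread : ∀ s, #{i | r i ≤ s} ≤ s + 1 := fun s => by
      by_contra! hs
      exact hD (det_chooseMatrix_eq_zero a b r s hs)
    obtain ⟨σ, hσ⟩ := exists_perm_eq_of_card_filter_le hspread (hkr ▸ hk)
    exact hr (mem_image.2 ⟨σ, mem_univ _, funext fun i => (hσ i).symm⟩)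

theorem exists_detPowPoly_eq_X_pow_mul :
    ∃ P : ℤ[X], detPowPoly a b = X ^ (∑ i : Fin m, (i : ℕ)) * P ∧
      P.coeff 0 = permChooseDetSum a b := by
  obtain ⟨P, hP⟩ : X ^ (∑ i : Fin m, (i : ℕ)) ∣ detPowPoly a b :=
    X_pow_dvd_iff.2 fun d hd => by rw [coeff_detPowPoly a b hd.le, if_neg hd.ne]
  refine ⟨P, hP, ?_⟩
  have := coeff_detPowPoly a b le_rfl
  rwa [if_pos rfl, hP, coeff_X_pow_mul', if_pos le_rfl, Nat.sub_self] at this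

theorem factorial_mul_choose_eq_sum {t : ℕ} (ht : t < m) (x y : ℕ) :
    (t.factorial : ℤ) * (x * y).choose t =
      ∑ u : Fin m, (descPochhammer ℤ t).coeff u * x ^ (u : ℕ) * y ^ (u : ℕ) := by
  rw [← Nat.cast_mul, ← Nat.descFactorial_eq_factorial_mul_choose,
    ← descPochhammer_eval_eq_descFactorial,
    eval_eq_sum_range' (n := m) (by rwa [descPochhammer_natDegree]),
    ← Fin.sum_univ_eq_sum_range]
  simp only [Nat.cast_mul, mul_pow, mul_assoc]

theorem prod_factorial_mul_det_chooseMatrix (σ : Equiv.Perm (Fin m)) :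
    (∏ i : Fin m, ((i : ℕ).factorial : ℤ)) * (chooseMatrix a b fun i => σ i).det =
      (of fun i u : Fin m => (descPochhammer ℤ (σ i)).coeff u * (a i : ℤ) ^ (u : ℕ)).det *
        (vandermonde fun j => (b j : ℤ)).det := by
  rw [← Equiv.prod_comp σ, ← det_mul_column, ← det_transpose (vandermonde _), ← det_mul]
  congr 1
  ext i j
  simp [chooseMatrix, mul_apply, factorial_mul_choose_eq_sum (σ i).2, mul_assoc]

theorem permanent_descPochhammer_coeff :
    (of fun t u : Fin m => (descPochhammer ℤ t).coeff u).permanent = 1 := by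
  rw [permanent_of_isLowerTriangular fun t u htu => ?_]
  · refine prod_eq_one fun t _ => ?_
    simpa [descPochhammer_natDegree] using (monic_descPochhammer ℤ (t : ℕ)).coeff_natDegree
  · exact coeff_eq_zero_of_natDegree_lt (by simpa [descPochhammer_natDegree] using htu)

theorem prod_factorial_mul_permChooseDetSum :
    (∏ i : Fin m, ((i : ℕ).factorial : ℤ)) * permChooseDetSum a b =
      (vandermonde fun i => (a i : ℤ)).det * (vandermonde fun j => (b j : ℤ)).det := by
  simp_rw [permChooseDetSum, mul_sum, prod_factorial_mul_det_chooseMatrix, ← sum_mul]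
  have := sum_perm_det_mul_eq_permanent_mul_det
    (of fun t u : Fin m => (descPochhammer ℤ t).coeff u) (vandermonde fun i => (a i : ℤ))
  rw [permanent_descPochhammer_coeff, one_mul] at this
  exact congrArg (· * _) this

theorem not_dvd_permChooseDetSum {p : ℕ} (hp : p.Prime)
    (ha : Function.Injective fun i => (a i : ZMod p))
    (hb : Function.Injective fun j => (b j : ZMod p)) :
    ¬ (p : ℤ) ∣ permChooseDetSum a b := by
  have := Fact.mk hp
  have hV : ∀ v : Fin m → ℕ, ((vandermonde fun i => (v i : ℤ)).det : ZMod p) =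
      (vandermonde fun i => (v i : ZMod p)).det := fun v => by
    rw [Int.cast_det]
    congr 1
    ext i j
    simp [vandermonde_apply]
  intro h
  have := congrArg (Int.cast : ℤ → ZMod p) (prod_factorial_mul_permChooseDetSum a b)
  rw [Int.cast_mul, Int.cast_mul, (ZMod.intCast_zmod_eq_zero_iff_dvd _ p).2 h, mul_zero,
    hV, hV] at this
  exact mul_ne_zero (det_vandermonde_ne_zero_iff.2 ha) (det_vandermonde_ne_zero_iff.2 hb)
    this.symm

theorem prime_dvd_coeff_zero_of_aeval_sub_one_eq_zero {K : Type*} [Field K] [CharZero K]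
    {p : ℕ} (hp : p.Prime) {ζ : K} (hζ : IsPrimitiveRoot ζ p) {P : ℤ[X]}
    (hP : aeval (ζ - 1) P = 0) : (p : ℤ) ∣ P.coeff 0 := by
  have := Fact.mk hp
  have hζP : aeval ζ (P.comp (X - 1)) = 0 := by simpa [aeval_comp] using hP
  have hdvd : cyclotomic p ℤ ∣ P.comp (X - 1) := by
    rw [cyclotomic_eq_minpoly hζ hp.pos]
    exact minpoly.isIntegrallyClosed_dvd (hζ.isIntegral hp.pos) hζP
  simpa [eval_comp, coeff_zero_eq_eval_zero] using eval_dvd (x := 1) hdvd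

theorem det_pow_mul_ne_zero_of_not_dvd {K : Type*} [Field K] [CharZero K] {p : ℕ}
    (hp : p.Prime) {ζ : K} (hζ : IsPrimitiveRoot ζ p)
    (hc : ¬ (p : ℤ) ∣ permChooseDetSum a b) :
    (of fun i j => ζ ^ (a i * b j)).det ≠ 0 := by
  intro h
  obtain ⟨P, hGP, hP⟩ := exists_detPowPoly_eq_X_pow_mul a b
  have hG : aeval (ζ - 1) (detPowPoly a b) = 0 := by
    rw [detPowPoly, AlgHom.map_det, ← h]
    congr 1
    ext i j
    simp
  rw [hGP, map_mul, map_pow, aeval_X] at hG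
  have hζ1 : ζ - 1 ≠ 0 := sub_ne_zero.2 (hζ.ne_one hp.one_lt)
  exact hc (hP ▸ prime_dvd_coeff_zero_of_aeval_sub_one_eq_zero hp hζ
    ((mul_eq_zero.1 hG).resolve_left (pow_ne_zero _ hζ1)))

end ChooseMatrix

theorem chebotarev_general (p : ℕ) (hp : p.Prime) [NeZero p] (m : ℕ)
    (k l : Fin m → ZMod p) (hk : Function.Injective k) (hl : Function.Injective l) :
    Matrix.det (Matrix.of fun i j : Fin m =>
      (1 / (Real.sqrt p : ℂ)) *
        Complex.exp (2 * (Real.pi : ℂ) * Complex.I * ((k i).val : ℂ) * ((l j).val : ℂ)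
          / (p : ℂ))) ≠ 0 := by
  set ζ : ℂ := Complex.exp (2 * Real.pi * Complex.I / p)
  have hζ : IsPrimitiveRoot ζ p := Complex.isPrimitiveRoot_exp p hp.ne_zero
  have hF : (of fun i j : Fin m => (1 / (Real.sqrt p : ℂ)) *
        Complex.exp (2 * (Real.pi : ℂ) * Complex.I * ((k i).val : ℂ) * ((l j).val : ℂ) / p)) =
      (1 / (Real.sqrt p : ℂ)) • of fun i j => ζ ^ ((k i).val * (l j).val) := by
    ext i j
    rw [Matrix.smul_apply, of_apply, of_apply, smul_eq_mul, ← Complex.exp_nat_mul]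
    push_cast
    ring_nf
  rw [hF, det_smul]
  refine mul_ne_zero (pow_ne_zero _ (by simp [hp.ne_zero]))
    (det_pow_mul_ne_zero_of_not_dvd _ _ hp hζ (not_dvd_permChooseDetSum _ _ hp ?_ ?_))
  · simpa using hk
  · simpa using hl

/-- **Chebotarëv's theorem.** For a prime `p`, every square submatrix of the Fourier matrix
`F_p = ((1/√p) e^{2πi kl/p})_{0 ≤ k,l ≤ p-1}` is nonsingular: for every `m ≥ 1` and every
pair of injective enumerations `k, l : Fin m → ZMod p` (i.e. subsets `K, L ⊆ {0,…,p-1}`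
with `|K| = |L| = m ≥ 1`), the submatrix `((1/√p) e^{2πi k_i l_j/p})_{i,j}` has nonzero
determinant. -/
theorem chebotarev (p : ℕ) (hp : p.Prime) [NeZero p] (m : ℕ) (hm : 1 ≤ m)
    (k l : Fin m → ZMod p) (hk : Function.Injective k) (hl : Function.Injective l) :
    Matrix.det (Matrix.of fun i j : Fin m =>
      (1 / (Real.sqrt p : ℂ)) *
        Complex.exp (2 * (Real.pi : ℂ) * Complex.I * ((k i).val : ℂ) * ((l j).val : ℂ)
          / (p : ℂ))) ≠ 0 :=
  chebotarev_general p hp m k l hk hl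
end

section
/- Let p be a prime number, set x_0 = 1, and define h : (ℂ*)^p → (ℂ*)^p by h(x_1, …, x_{p−1}, α) = (α x_1/x_0, α x_2/x_1, …, α x_0/x_{p−1}). Then h is a proper map (the preimage of every compact subset of (ℂ*)^p is compact), and for every (z_0, …, z_{p−1}) ∈ (ℂ*)^p the equation h(x_1, …, x_{p−1}, α) = (z_0, …, z_{p−1}) has exactly p distinct solutions (x_1, …, x_{p−1}, α) in (ℂ*)^p. -/
open scoped BigOperators

/-- Extension of `(x_1, …, x_{p-1}) ∈ ℂ^{p-1}` to `x = (1, x_1, …, x_{p-1}) ∈ ℂ^p`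
(so `x_0 = 1 = x_p`). -/
noncomputable def ext (p : ℕ) [NeZero p] (x' : {i : ZMod p // i ≠ 0} → ℂ) : ZMod p → ℂ :=
  fun i => if h : i = 0 then 1 else x' ⟨i, h⟩

/-- The map `h : (ℂ*)^p → (ℂ*)^p`,
`h(x_1, …, x_{p-1}, α) = (α x_1/x_0, α x_2/x_1, …, α x_0/x_{p-1})` with `x_0 = 1`. -/
noncomputable def hMap (p : ℕ) [NeZero p] :
    (({i : ZMod p // i ≠ 0} → ℂ) × ℂ) → (ZMod p → ℂ) :=
  fun w j => w.2 * ext p w.1 (j + 1) / ext p w.1 j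

/-!
Solving `h(x, α) = z` coordinate by coordinate from `x₀ = 1` forces
`xₙ = z₀ ⋯ zₙ₋₁ / αⁿ`, and closing the cycle (`xₚ = x₀ = 1`) forces `αᵖ = z₀ ⋯ zₚ₋₁`.
So the solutions over `z` are parametrized by the `p` distinct `p`-th roots of `∏ zⱼ`, and
over a compact `K ⊆ (ℂ*)ᵖ` the solution set is the continuous image of
`{(z, α) | z ∈ K, αᵖ = ∏ zⱼ}`, which is compact because `α ↦ αᵖ` is proper.
-/

theorem isProperMap_pow {𝕜 : Type*} [NormedField 𝕜] [ProperSpace 𝕜] {n : ℕ} (hn : n ≠ 0) :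
    IsProperMap fun x : 𝕜 => x ^ n := by
  simpa [Polynomial.eval_X_pow] using
    (Polynomial.X ^ n : Polynomial 𝕜).isProperMap_eval (by simp [Nat.pos_of_ne_zero hn])

theorem isCompact_setOf_pow_eq {X 𝕜 : Type*} [TopologicalSpace X] [NormedField 𝕜]
    [ProperSpace 𝕜] {K : Set X} (hK : IsCompact K) {f : X → 𝕜} (hf : Continuous f) {n : ℕ}
    (hn : n ≠ 0) : IsCompact {q : X × 𝕜 | q.1 ∈ K ∧ q.2 ^ n = f q.1} := by
  have hgraph : IsCompact ((fun x => (x, f x)) '' K) :=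
    hK.image (continuous_id.prodMk hf)
  convert (isProperMap_id.prodMap (isProperMap_pow hn)).isCompact_preimage hgraph using 1
  ext ⟨x, α⟩
  simp [eq_comm]

theorem ZMod.prod_univ_eq_prod_range {M : Type*} [CommMonoid M] (p : ℕ) [NeZero p]
    (f : ZMod p → M) : ∏ j : ZMod p, f j = ∏ k ∈ Finset.range p, f k := by
  obtain ⟨n, rfl⟩ := Nat.exists_eq_succ_of_ne_zero (NeZero.ne p)
  rw [← Fin.prod_univ_eq_prod_range]
  exact Fintype.prod_congr _ _ fun i => congrArg f (Fin.cast_val_eq_self i).symm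

theorem Complex.ncard_setOf_pow_eq {n : ℕ} (hn : n ≠ 0) {c : ℂ} (hc : c ≠ 0) :
    {α : ℂ | α ^ n = c}.ncard = n := by
  have hζ := Complex.isPrimitiveRoot_exp n hn
  have hset : {α : ℂ | α ^ n = c} = ↑(Polynomial.nthRoots n c).toFinset := by
    ext α
    simp [Polynomial.mem_nthRoots (Nat.pos_of_ne_zero hn)]
  classical
  rw [hset, Set.ncard_coe_finset, Multiset.toFinset_card_of_nodup (hζ.nthRoots_nodup hc),
    hζ.card_nthRoots, if_pos (IsAlgClosed.exists_pow_nat_eq c (Nat.pos_of_ne_zero hn))]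

section Fiber

variable {p : ℕ}

noncomputable def fiberCoord (z : ZMod p → ℂ) (α : ℂ) (n : ℕ) : ℂ :=
  (∏ k ∈ Finset.range n, z k) / α ^ n

noncomputable def fiberPoint (z : ZMod p → ℂ) (α : ℂ) : ({i : ZMod p // i ≠ 0} → ℂ) × ℂ :=
  (fun i => fiberCoord z α i.1.val, α)

@[simp]
theorem fiberCoord_zero (z : ZMod p → ℂ) (α : ℂ) : fiberCoord z α 0 = 1 := by
  simp [fiberCoord]

theorem fiberCoord_succ (z : ZMod p → ℂ) {α : ℂ} (hα : α ≠ 0) (n : ℕ) :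
    fiberCoord z α (n + 1) = fiberCoord z α n * z n / α := by
  simp only [fiberCoord, Finset.prod_range_succ, pow_succ]
  field_simp

theorem fiberCoord_ne_zero {z : ZMod p → ℂ} (hz : ∀ i, z i ≠ 0) {α : ℂ} (hα : α ≠ 0)
    (n : ℕ) : fiberCoord z α n ≠ 0 :=
  div_ne_zero (Finset.prod_ne_zero_iff.2 fun k _ => hz k) (pow_ne_zero n hα)

theorem fiberCoord_self_eq_one_iff [NeZero p] (z : ZMod p → ℂ) {α : ℂ} (hα : α ≠ 0) :
    fiberCoord z α p = 1 ↔ α ^ p = ∏ j, z j := by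
  rw [fiberCoord, div_eq_one_iff_eq (pow_ne_zero p hα), ZMod.prod_univ_eq_prod_range, eq_comm]

theorem ne_zero_of_pow_eq_prod [NeZero p] {z : ZMod p → ℂ} (hz : ∀ i, z i ≠ 0) {α : ℂ}
    (hroot : α ^ p = ∏ j, z j) : α ≠ 0 := by
  rintro rfl
  rw [zero_pow (NeZero.ne p), eq_comm, Finset.prod_eq_zero_iff] at hroot
  obtain ⟨j, -, hj⟩ := hroot
  exact hz j hj

theorem ext_ne_zero [NeZero p] {x : {i : ZMod p // i ≠ 0} → ℂ} (hx : ∀ i, x i ≠ 0)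
    (i : ZMod p) : ext p x i ≠ 0 := by
  unfold ext
  split
  · exact one_ne_zero
  · exact hx _

theorem ext_fiberPoint_natCast [NeZero p] (z : ZMod p → ℂ) {α : ℂ} (hα : α ≠ 0)
    (hroot : α ^ p = ∏ j, z j) {m : ℕ} (hm : m ≤ p) :
    ext p (fiberPoint z α).1 m = fiberCoord z α m := by
  rcases hm.lt_or_eq with hm | rfl
  · rcases m with _ | m
    · simp [ext]
    · have h0 : ((m + 1 : ℕ) : ZMod p) ≠ 0 := by
        rw [Ne, ← ZMod.val_eq_zero, ZMod.val_cast_of_lt hm]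
        exact m.succ_ne_zero
      rw [ext, dif_neg h0]
      exact congrArg (fiberCoord z α) (ZMod.val_cast_of_lt hm)
  · simp [ext, (fiberCoord_self_eq_one_iff z hα).2 hroot]

theorem hMap_fiberPoint [NeZero p] {z : ZMod p → ℂ} (hz : ∀ i, z i ≠ 0) {α : ℂ}
    (hα : α ≠ 0) (hroot : α ^ p = ∏ j, z j) : hMap p (fiberPoint z α) = z := by
  funext j
  have hj : j.val < p := ZMod.val_lt j
  rw [hMap, ← ZMod.natCast_zmod_val j, ← Nat.cast_succ,
    ext_fiberPoint_natCast z hα hroot hj, ext_fiberPoint_natCast z hα hroot hj.le,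
    fiberCoord_succ z hα]
  have := fiberCoord_ne_zero hz hα j.val
  simp only [fiberPoint]
  field_simp

theorem ext_natCast_eq_fiberCoord [NeZero p] {w : ({i : ZMod p // i ≠ 0} → ℂ) × ℂ}
    (hw : ∀ i, w.1 i ≠ 0) (hα : w.2 ≠ 0) (n : ℕ) :
    ext p w.1 n = fiberCoord (hMap p w) w.2 n := by
  induction n with
  | zero => simp [ext]
  | succ n ih =>
    rw [fiberCoord_succ _ hα, ← ih, hMap, Nat.cast_succ]
    have := ext_ne_zero hw n
    field_simp

theorem eq_fiberPoint_hMap [NeZero p] {w : ({i : ZMod p // i ≠ 0} → ℂ) × ℂ}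
    (hw : ∀ i, w.1 i ≠ 0) (hα : w.2 ≠ 0) :
    w.2 ^ p = ∏ j, hMap p w j ∧ fiberPoint (hMap p w) w.2 = w := by
  refine ⟨(fiberCoord_self_eq_one_iff _ hα).1 ?_, ?_⟩
  · rw [← ext_natCast_eq_fiberCoord hw hα, ZMod.natCast_self, ext, dif_pos rfl]
  · ext i
    · change fiberCoord _ _ _ = _
      rw [← ext_natCast_eq_fiberCoord hw hα, ZMod.natCast_zmod_val, ext, dif_neg i.2]
    · rfl

theorem mem_fiber_iff [NeZero p] {z : ZMod p → ℂ} (hz : ∀ i, z i ≠ 0)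
    (w : ({i : ZMod p // i ≠ 0} → ℂ) × ℂ) :
    ((∀ i, w.1 i ≠ 0) ∧ w.2 ≠ 0) ∧ hMap p w = z ↔
      ∃ α, α ^ p = ∏ j, z j ∧ fiberPoint z α = w := by
  constructor
  · rintro ⟨⟨hw, hα⟩, rfl⟩
    exact ⟨w.2, eq_fiberPoint_hMap hw hα⟩
  · rintro ⟨α, hroot, rfl⟩
    have hα := ne_zero_of_pow_eq_prod hz hroot
    exact ⟨⟨fun i => fiberCoord_ne_zero hz hα i.1.val, hα⟩, hMap_fiberPoint hz hα hroot⟩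

theorem setOf_mem_fiber_eq_image [NeZero p] {z : ZMod p → ℂ} (hz : ∀ i, z i ≠ 0) :
    {w : ({i : ZMod p // i ≠ 0} → ℂ) × ℂ | ((∀ i, w.1 i ≠ 0) ∧ w.2 ≠ 0) ∧ hMap p w = z} =
      fiberPoint z '' {α | α ^ p = ∏ j, z j} :=
  Set.ext (mem_fiber_iff hz)

theorem inter_preimage_hMap_eq_image [NeZero p] {K : Set (ZMod p → ℂ)}
    (hK : ∀ z ∈ K, ∀ i, z i ≠ 0) :
    {w : ({i : ZMod p // i ≠ 0} → ℂ) × ℂ | (∀ i, w.1 i ≠ 0) ∧ w.2 ≠ 0} ∩ hMap p ⁻¹' K =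
      (fun q : (ZMod p → ℂ) × ℂ => fiberPoint q.1 q.2) ''
        {q | q.1 ∈ K ∧ q.2 ^ p = ∏ j, q.1 j} := by
  ext w
  constructor
  · rintro ⟨hw, hwK⟩
    obtain ⟨α, hroot, hα⟩ := (mem_fiber_iff (hK _ hwK) w).1 ⟨hw, rfl⟩
    exact ⟨(hMap p w, α), ⟨hwK, hroot⟩, hα⟩
  · rintro ⟨⟨z, α⟩, ⟨hzK, hroot⟩, rfl⟩
    obtain ⟨hw, hwz⟩ := (mem_fiber_iff (hK z hzK) _).2 ⟨α, hroot, rfl⟩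
    exact ⟨hw, by rwa [Set.mem_preimage, hwz]⟩

theorem continuousOn_fiberPoint :
    ContinuousOn (fun q : (ZMod p → ℂ) × ℂ => fiberPoint q.1 q.2) {q | q.2 ≠ 0} := by
  unfold fiberPoint fiberCoord
  refine ContinuousOn.prodMk (continuousOn_pi.2 fun i => ?_) continuous_snd.continuousOn
  exact ContinuousOn.div (by fun_prop) (by fun_prop) fun q hq => pow_ne_zero _ hq

end Fiber

theorem hMap_proper_and_fibers_general (p : ℕ) [NeZero p] :
    (∀ K : Set (ZMod p → ℂ), IsCompact K → (∀ z ∈ K, ∀ i, z i ≠ 0) →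
      IsCompact ({w : ({i : ZMod p // i ≠ 0} → ℂ) × ℂ | (∀ i, w.1 i ≠ 0) ∧ w.2 ≠ 0} ∩
        hMap p ⁻¹' K)) ∧
    (∀ z : ZMod p → ℂ, (∀ i, z i ≠ 0) →
      {w : ({i : ZMod p // i ≠ 0} → ℂ) × ℂ |
        ((∀ i, w.1 i ≠ 0) ∧ w.2 ≠ 0) ∧ hMap p w = z}.ncard = p) := by
  refine ⟨fun K hK hKz => ?_, fun z hz => ?_⟩
  · rw [inter_preimage_hMap_eq_image hKz]
    refine (isCompact_setOf_pow_eq hK (by fun_prop) (NeZero.ne p)).image_of_continuousOn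
      (continuousOn_fiberPoint.mono ?_)
    rintro ⟨z, α⟩ ⟨hzK, hroot⟩
    exact ne_zero_of_pow_eq_prod (hKz z hzK) hroot
  · rw [setOf_mem_fiber_eq_image hz,
      Set.ncard_image_of_injective _ fun a b hab => congrArg Prod.snd hab,
      Complex.ncard_setOf_pow_eq (NeZero.ne p) (Finset.prod_ne_zero_iff.2 fun j _ => hz j)]

/-- For `p` prime, `h` is a proper map from `(ℂ*)^p` to `(ℂ*)^p` (the preimage of every
compact subset of `(ℂ*)^p` is compact), and for every `z ∈ (ℂ*)^p` the equation
`h(x_1, …, x_{p-1}, α) = z` has exactly `p` distinct solutions in `(ℂ*)^p`. -/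
theorem hMap_proper_and_fibers (p : ℕ) (hp : p.Prime) [NeZero p] :
    (∀ K : Set (ZMod p → ℂ), IsCompact K → (∀ z ∈ K, ∀ i, z i ≠ 0) →
      IsCompact ({w : ({i : ZMod p // i ≠ 0} → ℂ) × ℂ | (∀ i, w.1 i ≠ 0) ∧ w.2 ≠ 0} ∩
        hMap p ⁻¹' K)) ∧
    (∀ z : ZMod p → ℂ, (∀ i, z i ≠ 0) →
      {w : ({i : ZMod p // i ≠ 0} → ℂ) × ℂ |
        ((∀ i, w.1 i ≠ 0) ∧ w.2 ≠ 0) ∧ hMap p w = z}.ncard = p) :=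
  hMap_proper_and_fibers_general p
end
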